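/- arXiv:2603.27655 — 2 statements merged into one kernel-verified Lean document; each statement's English description precedes it below -/
import Mathlib

section
/- Let G be an edge-minimal non-cactus connected graph, i.e., G is connected, not a cactus, and G - e is a cactus for every edge e of G. Then for any two edges e1 and e2 of G, there exists a simple cycle C in G containing both e1 and e2. -/
open SimpleGraph

/-- A cactus is a connected graph in which every edge belongs to at most one simple
cycle: any two simple cycles sharing an edge have the same edge set. -/
def SimpleGraph.IsCactus {V : Type*} (G : SimpleGraph V) : Prop :=
  G.Connected ∧ ∀ ⦃u v : V⦄ (c₁ : G.Walk u u) (c₂ : G.Walk v v),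
    c₁.IsCycle → c₂.IsCycle → ∀ e, e ∈ c₁.edges → e ∈ c₂.edges →
      {f | f ∈ c₁.edges} = {f | f ∈ c₂.edges}

private lemma edges_toDeleteEdges' {V : Type*} {G : SimpleGraph V} (s : Set (Sym2 V))
    {v w : V} (p : G.Walk v w) (hp : ∀ e ∈ p.edges, e ∉ s) :
    (p.toDeleteEdges s hp).edges = p.edges :=
  p.edges_transfer _

/-- Lift a cycle in a deleted-edges graph back to the ambient graph. -/
private lemma lift_cycle {V : Type*} {G : SimpleGraph V} {s : Set (Sym2 V)} {u : V}
    {p : (G.deleteEdges s).Walk u u} (hp : p.IsCycle) :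
    ∃ q : G.Walk u u, q.IsCycle ∧ q.edges = p.edges :=
  ⟨p.transfer G (fun e he => ((G.edgeSet_deleteEdges s ▸ p.edges_subset_edgeSet he)).1),
   hp.transfer _, p.edges_transfer _⟩

/-- If deleting an edge keeps the graph connected, the edge lies on a cycle. -/
private lemma exists_cycle_through {V : Type*} {G : SimpleGraph V} :
    ∀ {e : Sym2 V}, e ∈ G.edgeSet → (G.deleteEdges {e}).Connected →
      ∃ (u : V) (p : G.Walk u u), p.IsCycle ∧ e ∈ p.edges := by
  intro e
  induction e using Sym2.ind with
  | _ a b =>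
    intro he hc
    rw [← adj_and_reachable_delete_edges_iff_exists_cycle]
    exact ⟨G.mem_edgeSet.mp he, hc.preconnected a b⟩

/-- Deleting an edge lying on a cycle of a connected graph keeps it connected. -/
private lemma connected_deleteEdges_of_cycle {V : Type*} {H : SimpleGraph V} (hc : H.Connected)
    {u : V} {p : H.Walk u u} (hp : p.IsCycle) :
    ∀ {g : Sym2 V}, g ∈ p.edges → (H.deleteEdges {g}).Connected := by
  intro g
  induction g using Sym2.ind with
  | _ x y =>
    intro hg
    have hreach : (H.deleteEdges {s(x, y)}).Reachable x y :=
      (adj_and_reachable_delete_edges_iff_exists_cycle.mpr ⟨u, p, hp, hg⟩).2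
    have key : ∀ {a b : V}, H.Walk a b → (H.deleteEdges {s(x, y)}).Reachable a b := by
      intro a b q
      induction q with
      | nil => exact Reachable.refl _
      | @cons c d e hadj qtail ih =>
        refine Reachable.trans ?_ ih
        by_cases hcd : s(c, d) = s(x, y)
        · rw [Sym2.eq_iff] at hcd
          rcases hcd with ⟨rfl, rfl⟩ | ⟨rfl, rfl⟩
          · exact hreach
          · exact hreach.symm
        · exact Adj.reachable (by rw [deleteEdges_adj]; exact ⟨hadj, by simpa using hcd⟩)
    rw [connected_iff]
    refine ⟨fun a b => ?_, hc.nonempty⟩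
    exact (hc.preconnected a b).elim fun q => key q

/-- In a graph whose deletion of `e₂` is a cactus, any two cycles through `e₁` avoiding `e₂`
have the same edge set. -/
private lemma cycles_through_edge_eq {V : Type*} {G : SimpleGraph V}
    {e₁ e₂ : Sym2 V}
    (hcac : (G.deleteEdges {e₂}).IsCactus)
    {u : V} {d : G.Walk u u} (hd : d.IsCycle) (hed : e₁ ∈ d.edges) (hed₂ : e₂ ∉ d.edges)
    {w : V} {c : G.Walk w w} (hc : c.IsCycle) (hec : e₁ ∈ c.edges) (hec₂ : e₂ ∉ c.edges) :
    {f | f ∈ c.edges} = {f | f ∈ d.edges} := by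
  have hdav : ∀ e ∈ d.edges, e ∉ ({e₂} : Set (Sym2 V)) := by
    intro e he h
    rw [Set.mem_singleton_iff] at h
    exact hed₂ (h ▸ he)
  have hcav : ∀ e ∈ c.edges, e ∉ ({e₂} : Set (Sym2 V)) := by
    intro e he h
    rw [Set.mem_singleton_iff] at h
    exact hec₂ (h ▸ he)
  have := hcac.2 (c.toDeleteEdges {e₂} hcav) (d.toDeleteEdges {e₂} hdav)
    (hc.toDeleteEdges G _ hcav) (hd.toDeleteEdges G _ hdav) e₁
    (by rw [edges_toDeleteEdges']; exact hec) (by rw [edges_toDeleteEdges']; exact hed)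
  rwa [edges_toDeleteEdges', edges_toDeleteEdges'] at this

private lemma not_connected_of_isBridge {V : Type*} {H : SimpleGraph V} {e : Sym2 V}
    (h : H.IsBridge e) : ¬ (H.deleteEdges {e}).Connected := by
  induction e using Sym2.ind with
  | _ a b =>
    rw [isBridge_iff] at h
    exact fun hc => h (hc.preconnected a b)

/-- The final contradiction: if all cycles through `e₁` have edge set `D`, `g ∈ D`, yet some
cycle contains `g` and avoids `e₁`, then minimality is violated. -/
private lemma final_contra {V : Type*} {G : SimpleGraph V}
    (hmin : ∀ e ∈ G.edgeSet, (G.deleteEdges {e}).IsCactus)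
    {e₁ g : Sym2 V} (he₁ : e₁ ∈ G.edgeSet)
    {D : Set (Sym2 V)}
    (hAll : ∀ {w : V} (c : G.Walk w w), c.IsCycle → e₁ ∈ c.edges → {f | f ∈ c.edges} = D)
    (hgD : g ∈ D)
    {v : V} {c : G.Walk v v} (hc : c.IsCycle) (hgc : g ∈ c.edges) (he₁c : e₁ ∉ c.edges) :
    False := by
  have hg : g ∈ G.edgeSet := c.edges_subset_edgeSet hgc
  have hne : e₁ ≠ g := fun h => he₁c (h ▸ hgc)
  -- `e₁` is a bridge of `G - g`
  have hbr : (G.deleteEdges {g}).IsBridge e₁ := by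
    rw [isBridge_iff_mem_and_forall_cycle_notMem (by rw [edgeSet_deleteEdges]; exact ⟨he₁, by simpa using hne⟩)]
    intro w p hp hep
    obtain ⟨q, hq, hqe⟩ := lift_cycle hp
    have hD := hAll q hq (by rw [hqe]; exact hep)
    have hgq : g ∈ q.edges := by
      have : g ∈ {f | f ∈ q.edges} := hD ▸ hgD
      exact this
    rw [hqe] at hgq
    have := p.edges_subset_edgeSet hgq
    rw [edgeSet_deleteEdges] at this
    exact this.2 rfl
  -- but `G - {e₁, g}` is connected
  have hconn₁ : (G.deleteEdges {e₁}).Connected := (hmin e₁ he₁).1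
  have hcav : ∀ e ∈ c.edges, e ∉ ({e₁} : Set (Sym2 V)) := by
    intro e he h
    rw [Set.mem_singleton_iff] at h
    exact he₁c (h ▸ he)
  have hc' := hc.toDeleteEdges G ({e₁} : Set (Sym2 V)) hcav
  have hgc' : g ∈ (c.toDeleteEdges {e₁} hcav).edges := by
    rw [edges_toDeleteEdges']; exact hgc
  have hconn₂ := connected_deleteEdges_of_cycle hconn₁ hc' hgc'
  rw [deleteEdges_deleteEdges] at hconn₂
  have hconn₃ : ((G.deleteEdges {g}).deleteEdges {e₁}).Connected := by
    rw [deleteEdges_deleteEdges, Set.union_comm]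
    exact hconn₂
  exact not_connected_of_isBridge hbr hconn₃

theorem two_edges_common_cycle {V : Type*} (G : SimpleGraph V)
    (hconn : G.Connected) (hnc : ¬G.IsCactus)
    (hmin : ∀ e ∈ G.edgeSet, (G.deleteEdges {e}).IsCactus) :
    ∀ e₁ ∈ G.edgeSet, ∀ e₂ ∈ G.edgeSet,
      ∃ (w : V) (c : G.Walk w w), c.IsCycle ∧ e₁ ∈ c.edges ∧ e₂ ∈ c.edges := by
  intro e₁ he₁ e₂ he₂
  by_contra hcontra
  push_neg at hcontra
  -- hcontra : ∀ w c, c.IsCycle → e₁ ∈ c.edges → e₂ ∉ c.edges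
  -- a cycle through e₁
  obtain ⟨u₁, d₁, hd₁, he₁d₁⟩ := exists_cycle_through he₁ (hmin e₁ he₁).1
  have he₂d₁ : e₂ ∉ d₁.edges := hcontra _ d₁ hd₁ he₁d₁
  -- all cycles through e₁ have the same edge set
  have hAll : ∀ {w : V} (c : G.Walk w w), c.IsCycle → e₁ ∈ c.edges →
      {f | f ∈ c.edges} = {f | f ∈ d₁.edges} := by
    intro w c hc he
    exact cycles_through_edge_eq (hmin e₂ he₂) hd₁ he₁d₁ he₂d₁ hc he (hcontra _ c hc he)
  -- non-cactusness gives two cycles sharing an edge with different edge sets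
  have hnc' : ¬ ∀ ⦃u v : V⦄ (c₁ : G.Walk u u) (c₂ : G.Walk v v),
      c₁.IsCycle → c₂.IsCycle → ∀ e, e ∈ c₁.edges → e ∈ c₂.edges →
        {f | f ∈ c₁.edges} = {f | f ∈ c₂.edges} := fun h => hnc ⟨hconn, h⟩
  push_neg at hnc'
  obtain ⟨u, v, c₁, c₂, hc₁, hc₂, g, hg₁, hg₂, hne⟩ := hnc'
  -- every edge of G lies on c₁ or c₂
  have cover : ∀ f ∈ G.edgeSet, f ∈ c₁.edges ∨ f ∈ c₂.edges := by
    intro f hf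
    by_contra hff
    push_neg at hff
    have h1av : ∀ e ∈ c₁.edges, e ∉ ({f} : Set (Sym2 V)) := by
      intro e he h
      rw [Set.mem_singleton_iff] at h
      exact hff.1 (h ▸ he)
    have h2av : ∀ e ∈ c₂.edges, e ∉ ({f} : Set (Sym2 V)) := by
      intro e he h
      rw [Set.mem_singleton_iff] at h
      exact hff.2 (h ▸ he)
    have := (hmin f hf).2 (c₁.toDeleteEdges {f} h1av) (c₂.toDeleteEdges {f} h2av)
      (hc₁.toDeleteEdges G _ h1av) (hc₂.toDeleteEdges G _ h2av) g
      (by rw [edges_toDeleteEdges']; exact hg₁) (by rw [edges_toDeleteEdges']; exact hg₂)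
    rw [edges_toDeleteEdges', edges_toDeleteEdges'] at this
    exact hne this
  rcases cover e₁ he₁ with h1 | h1
  · rcases cover e₂ he₂ with h2 | h2
    · exact hcontra _ c₁ hc₁ h1 h2
    · by_cases h3 : e₁ ∈ c₂.edges
      · exact hcontra _ c₂ hc₂ h3 h2
      · have hgD : g ∈ {f | f ∈ d₁.edges} := hAll c₁ hc₁ h1 ▸ hg₁
        exact final_contra hmin he₁ hAll hgD hc₂ hg₂ h3
  · by_cases h3 : e₂ ∈ c₂.edges
    · exact hcontra _ c₂ hc₂ h1 h3
    · by_cases h4 : e₁ ∈ c₁.edges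
      · rcases cover e₂ he₂ with h2 | h2
        · exact hcontra _ c₁ hc₁ h4 h2
        · exact hcontra _ c₂ hc₂ h1 h2
      · have hgD : g ∈ {f | f ∈ d₁.edges} := hAll c₂ hc₂ h1 ▸ hg₂
        exact final_contra hmin he₁ hAll hgD hc₁ hg₁ h4
end

section
/- Let G be a connected graph with spanning tree T, and let F be a set of non-tree edges of G. Then the graph H := (V, E(T) ∪ F) is a cactus if and only if the tree paths in T associated with the edges of F (i.e., for each edge uv ∈ F, the unique u–v path in T) are pairwise edge-disjoint. -/
open SimpleGraph

namespace CactusAux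

open Walk

variable {V : Type*}

section Helpers

variable {G : SimpleGraph V}

lemma exists_edge_start {u v : V} (w : G.Walk u v) (hw : ¬ w.Nil) :
    ∃ f ∈ w.edges, u ∈ f := by
  cases w with
  | nil => simp at hw
  | cons h q => exact ⟨_, List.mem_cons_self, Sym2.mem_mk_left _ _⟩

lemma exists_edge_end {u v : V} (w : G.Walk u v) (hw : ¬ w.Nil) :
    ∃ f ∈ w.edges, v ∈ f := by
  have hw' : ¬ w.reverse.Nil := by
    rw [Walk.nil_iff_length_eq] at hw ⊢
    simpa using hw
  obtain ⟨f, hf, hv⟩ := exists_edge_start w.reverse hw'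
  rw [Walk.edges_reverse, List.mem_reverse] at hf
  exact ⟨f, hf, hv⟩

lemma exists_edge_of_mem_support {u v z : V} (w : G.Walk u v) (hw : ¬ w.Nil)
    (hz : z ∈ w.support) : ∃ f ∈ w.edges, z ∈ f := by
  classical
  by_cases hzu : z = u
  · subst hzu; exact exists_edge_start w hw
  · have ht : ¬ (w.takeUntil z hz).Nil := by
      rw [Walk.nil_iff_length_eq]
      intro h0
      exact hzu (Walk.eq_of_length_eq_zero h0).symm
    obtain ⟨f, hf, hzf⟩ := exists_edge_end (w.takeUntil z hz) ht
    exact ⟨f, w.edges_takeUntil_subset hz hf, hzf⟩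

lemma two_edges_of_internal {u v z : V} {w : G.Walk u v} (hw : w.IsPath) (hz : z ∈ w.support)
    (hzu : z ≠ u) (hzv : z ≠ v) :
    ∃ f₁ ∈ w.edges, ∃ f₂ ∈ w.edges, f₁ ≠ f₂ ∧ z ∈ f₁ ∧ z ∈ f₂ := by
  classical
  have hspec := w.take_spec hz
  have ht : ¬ (w.takeUntil z hz).Nil := by
    rw [Walk.nil_iff_length_eq]
    intro h0
    exact hzu (Walk.eq_of_length_eq_zero h0).symm
  have hd : ¬ (w.dropUntil z hz).Nil := by
    rw [Walk.nil_iff_length_eq]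
    intro h0
    exact hzv (Walk.eq_of_length_eq_zero h0)
  obtain ⟨f₁, hf₁, hzf₁⟩ := exists_edge_end (w.takeUntil z hz) ht
  obtain ⟨f₂, hf₂, hzf₂⟩ := exists_edge_start (w.dropUntil z hz) hd
  have hnd : w.edges.Nodup := hw.isTrail.edges_nodup
  rw [← hspec, Walk.edges_append, List.nodup_append] at hnd
  refine ⟨f₁, w.edges_takeUntil_subset hz hf₁, f₂, w.edges_dropUntil_subset hz hf₂, ?_, hzf₁, hzf₂⟩
  intro hEq
  exact hnd.2.2 f₁ hf₁ f₂ hf₂ hEq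

lemma mem_support_of_mem_edge {u v z : V} {e : Sym2 V} (p : G.Walk u v) (he : e ∈ p.edges)
    (hz : z ∈ e) : z ∈ p.support := by
  induction e using Sym2.ind with
  | _ x y =>
    rcases Sym2.mem_iff.1 hz with rfl | rfl
    · exact p.fst_mem_support_of_mem_edges he
    · exact p.snd_mem_support_of_mem_edges he

lemma cluster_two {a b z : V} (P : G.Walk a b) (hP : P.IsPath) (hab : a ≠ b)
    (hz : z ∈ P.support) (hnT : s(a, b) ∉ G.edgeSet) :
    ∃ f₁ f₂ : Sym2 V, f₁ ≠ f₂ ∧ z ∈ f₁ ∧ z ∈ f₂ ∧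
      (f₁ = s(a, b) ∨ f₁ ∈ P.edges) ∧ (f₂ = s(a, b) ∨ f₂ ∈ P.edges) := by
  have hPnil : ¬ P.Nil := by
    rw [Walk.nil_iff_length_eq]
    intro h0
    exact hab (Walk.eq_of_length_eq_zero h0)
  by_cases hza : z = a
  · subst hza
    obtain ⟨f, hf, hzf⟩ := exists_edge_start P hPnil
    refine ⟨s(z, b), f, ?_, Sym2.mem_mk_left _ _, hzf, Or.inl rfl, Or.inr hf⟩
    intro hEq
    exact hnT (hEq ▸ P.edges_subset_edgeSet hf)
  · by_cases hzb : z = b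
    · subst hzb
      obtain ⟨f, hf, hzf⟩ := exists_edge_end P hPnil
      refine ⟨s(a, z), f, ?_, Sym2.mem_mk_right _ _, hzf, Or.inl rfl, Or.inr hf⟩
      intro hEq
      exact hnT (hEq ▸ P.edges_subset_edgeSet hf)
    · obtain ⟨f₁, hf₁, f₂, hf₂, h12, hz1, hz2⟩ := two_edges_of_internal hP hz hza hzb
      exact ⟨f₁, f₂, h12, hz1, hz2, Or.inr hf₁, Or.inr hf₂⟩

lemma walk_side (S : Set V) {u v : V} (w : G.Walk u v)
    (h : ∀ f ∈ w.edges, (∀ z ∈ f, z ∈ S) ∨ (∀ z ∈ f, z ∉ S)) :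
    ∀ x ∈ w.support, (x ∈ S ↔ u ∈ S) := by
  induction w with
  | nil =>
    intro x hx
    rw [Walk.support_nil, List.mem_singleton] at hx
    subst hx; rfl
  | @cons a b c hadj q ih =>
    intro x hx
    have hfirst := h s(a, b) (by simp)
    have hab : b ∈ S ↔ a ∈ S := by
      rcases hfirst with hin | hout
      · exact iff_of_true (hin b (by simp)) (hin a (by simp))
      · exact iff_of_false (hout b (by simp)) (hout a (by simp))
    rw [Walk.support_cons, List.mem_cons] at hx
    rcases hx with rfl | hx
    · rfl
    · rw [ih (fun f hf => h f (by simp [hf])) x hx, hab]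

lemma countP_le_one_of_unique {α : Type*} {l : List α} (hl : l.Nodup) {p : α → Bool}
    (h : ∀ a ∈ l, ∀ b ∈ l, p a → p b → a = b) : l.countP p ≤ 1 := by
  rw [List.countP_eq_length_filter]
  by_contra hc
  push_neg at hc
  obtain ⟨x, t, ht⟩ : ∃ x t, l.filter p = x :: t := by
    cases hfl : l.filter p with
    | nil => rw [hfl] at hc; simp at hc
    | cons x t => exact ⟨x, t, rfl⟩
  obtain ⟨y, t', ht'⟩ : ∃ y t', t = y :: t' := by
    cases t with
    | nil => rw [ht] at hc; simp at hc
    | cons y t' => exact ⟨y, t', rfl⟩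
  subst ht'
  have hnd : (l.filter p).Nodup := hl.filter p
  rw [ht] at hnd
  have hxy : x ≠ y := by
    rcases List.nodup_cons.1 hnd with ⟨hx, _⟩
    exact fun hEq => hx (hEq ▸ (List.mem_cons_self : y ∈ y :: t'))
  have hxm : x ∈ l.filter p := ht ▸ (List.mem_cons_self : x ∈ x :: y :: t')
  have hym : y ∈ l.filter p := ht ▸ List.mem_cons_of_mem x (List.mem_cons_self : y ∈ y :: t')
  rw [List.mem_filter] at hxm hym
  exact hxy (h x hxm.1 y hym.1 hxm.2 hym.2)

lemma edges_mapLe {G H : SimpleGraph V} (h : G ≤ H) {u v : V} (p : G.Walk u v) :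
    (p.mapLe h).edges = p.edges := by
  have hfun : ∀ e : Sym2 V, Sym2.map (⇑(Hom.ofLE h)) e = e := by
    intro e; induction e using Sym2.ind with | _ x y => rfl
  rw [Walk.mapLe, Walk.edges_map]
  exact List.map_id'' hfun p.edges

end Helpers

section Cycle

variable {G : SimpleGraph V}

lemma cycle_snd_darts_nodup {u : V} {c : G.Walk u u} (hc : c.IsCycle) :
    (c.darts.map (·.toProd.2)).Nodup := by
  rw [Walk.map_snd_darts]
  exact hc.support_nodup

lemma cycle_fst_darts_nodup {u : V} {c : G.Walk u u} (hc : c.IsCycle) :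
    (c.darts.map (·.toProd.1)).Nodup := by
  rw [Walk.map_fst_darts]
  obtain ⟨t, ht⟩ : ∃ t, c.support = u :: t := ⟨c.support.tail, c.support_eq_cons⟩
  have htnd : t.Nodup := by have := hc.support_nodup; rw [ht] at this; simpa using this
  have hlen : c.support.length = c.length + 1 := c.length_support
  have h3 := hc.three_le_length
  obtain ⟨x, t', rfl⟩ : ∃ x t', t = x :: t' := by
    cases t with
    | nil => rw [ht, List.length_singleton] at hlen; omega
    | cons x t' => exact ⟨x, t', rfl⟩
  have h1 : (x :: t').getLast? = some u := by
    have h2 : c.support.getLast? = some u := by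
      rw [List.getLast?_eq_getLast (l := c.support) (by simp), c.getLast_support]
    rw [ht, List.getLast?_cons_cons] at h2
    exact h2
  have hne' : x :: t' ≠ [] := by simp
  have hlast : (x :: t').getLast hne' = u := (List.getLast_eq_iff_getLast?_eq_some hne').2 h1
  rw [ht, List.dropLast_cons_of_ne_nil hne']
  refine List.nodup_cons.2 ⟨?_, htnd.sublist (List.dropLast_sublist _)⟩
  intro hu
  have hsplit := List.dropLast_append_getLast hne'
  rw [hlast] at hsplit
  rw [← hsplit] at htnd
  exact (List.nodup_append.1 htnd).2.2 u hu u (List.mem_singleton_self u) rfl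

/-- In a cycle, at most two distinct edges are incident to any given vertex. -/
lemma cycle_not_three_incident {u v : V} {c : G.Walk u u} (hc : c.IsCycle)
    {f₁ f₂ f₃ : Sym2 V} (h₁ : f₁ ∈ c.edges) (h₂ : f₂ ∈ c.edges) (h₃ : f₃ ∈ c.edges)
    (h12 : f₁ ≠ f₂) (h13 : f₁ ≠ f₃) (h23 : f₂ ≠ f₃)
    (hv₁ : v ∈ f₁) (hv₂ : v ∈ f₂) (hv₃ : v ∈ f₃) : False := by
  have hed : ∀ {f : Sym2 V}, f ∈ c.edges → v ∈ f →
      ∃ d ∈ c.darts, d.edge = f ∧ (d.toProd.1 = v ∨ d.toProd.2 = v) := by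
    intro f hf hvf
    obtain ⟨d, hd, hde⟩ := List.mem_map.1 hf
    refine ⟨d, hd, hde, ?_⟩
    rw [← hde] at hvf
    rcases Sym2.mem_iff.1 hvf with h | h
    · exact Or.inl h.symm
    · exact Or.inr h.symm
  obtain ⟨d₁, hd₁, he₁, hs₁⟩ := hed h₁ hv₁
  obtain ⟨d₂, hd₂, he₂, hs₂⟩ := hed h₂ hv₂
  obtain ⟨d₃, hd₃, he₃, hs₃⟩ := hed h₃ hv₃
  have hfst := List.inj_on_of_nodup_map (cycle_fst_darts_nodup hc)
  have hsnd := List.inj_on_of_nodup_map (cycle_snd_darts_nodup hc)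
  have hne12 : d₁ ≠ d₂ := fun h => h12 (by rw [← he₁, ← he₂, h])
  have hne13 : d₁ ≠ d₃ := fun h => h13 (by rw [← he₁, ← he₃, h])
  have hne23 : d₂ ≠ d₃ := fun h => h23 (by rw [← he₂, ← he₃, h])
  rcases hs₁ with h1 | h1 <;> rcases hs₂ with h2 | h2 <;> rcases hs₃ with h3 | h3
  · exact hne12 (hfst hd₁ hd₂ (by rw [h1, h2]))
  · exact hne12 (hfst hd₁ hd₂ (by rw [h1, h2]))
  · exact hne13 (hfst hd₁ hd₃ (by rw [h1, h3]))
  · exact hne23 (hsnd hd₂ hd₃ (by rw [h2, h3]))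
  · exact hne23 (hfst hd₂ hd₃ (by rw [h2, h3]))
  · exact hne13 (hsnd hd₁ hd₃ (by rw [h1, h3]))
  · exact hne12 (hsnd hd₁ hd₂ (by rw [h1, h2]))
  · exact hne12 (hsnd hd₁ hd₂ (by rw [h1, h2]))

end Cycle

section Parity

variable {G : SimpleGraph V}

lemma crossing_parity [DecidableEq V] {x y : V}
    (hnr : ¬ (G \ fromEdgeSet {s(x, y)}).Reachable x y) :
    ∀ {u v : V} (w : G.Walk u v),
      (Even (w.edges.count s(x, y)) ↔
        ((G \ fromEdgeSet {s(x, y)}).Reachable x u ↔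
          (G \ fromEdgeSet {s(x, y)}).Reachable x v)) := by
  intro u v w
  induction w with
  | nil => simp
  | @cons u z v h q ih =>
    rw [Walk.edges_cons, List.count_cons]
    by_cases hE : s(u, z) = s(x, y)
    · have hRx : (G \ fromEdgeSet {s(x, y)}).Reachable x x := Reachable.refl x
      have hnRy : ¬ (G \ fromEdgeSet {s(x, y)}).Reachable x y := hnr
      rw [if_pos (by exact beq_iff_eq.2 hE)]
      rw [Nat.even_add_one]
      rw [ih]
      rcases Sym2.eq_iff.1 hE with ⟨rfl, rfl⟩ | ⟨rfl, rfl⟩ <;>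
        · constructor <;> · intros; tauto
    · have hadj' : (G \ fromEdgeSet {s(x, y)}).Adj u z := by
        rw [sdiff_adj, fromEdgeSet_adj]
        exact ⟨h, fun hc => hE hc.1⟩
      have hzu : (G \ fromEdgeSet {s(x, y)}).Reachable x u ↔
          (G \ fromEdgeSet {s(x, y)}).Reachable x z :=
        ⟨fun hr => hr.trans ⟨hadj'.toWalk⟩, fun hr => hr.trans ⟨hadj'.symm.toWalk⟩⟩
      rw [if_neg (by simpa using hE)]
      rw [Nat.add_zero, ih, hzu]

lemma acyclic_even_count [DecidableEq V] (hac : G.IsAcyclic) {u : V} (w : G.Walk u u)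
    (e : Sym2 V) : Even (w.edges.count e) := by
  by_cases he : e ∈ G.edgeSet
  · induction e using Sym2.ind with
    | _ x y =>
      have hb := isAcyclic_iff_forall_edge_isBridge.1 hac he
      have hnr := isBridge_iff.1 hb
      exact (crossing_parity hnr w).2 Iff.rfl
  · have : e ∉ w.edges := fun hc => he (w.edges_subset_edgeSet hc)
    simp [List.count_eq_zero.2 this]

end Parity

section Flatten

variable [DecidableEq V] {T : SimpleGraph V}

open scoped Classical in
/-- Flatten a walk in a supergraph into a walk in `T`, replacing each non-`T` step by the
canonical `T`-walk `tp` between its endpoints. -/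
noncomputable def flat (tp : ∀ u v : V, T.Walk u v) {H : SimpleGraph V} :
    ∀ {u v : V}, H.Walk u v → T.Walk u v
  | _, _, Walk.nil => Walk.nil
  | _, _, @Walk.cons _ _ a b _ _ q =>
      if h' : T.Adj a b then Walk.cons h' (flat tp q) else (tp a b).append (flat tp q)

variable (tp : ∀ u v : V, T.Walk u v) (htp : ∀ u v, (tp u v).IsPath)
  (huniq : ∀ {u v : V} (p : T.Walk u v), p.IsPath → p = tp u v)

set_option linter.unusedSectionVars false

include htp huniq

omit htp huniq in
lemma flat_nil {H : SimpleGraph V} {u : V} : flat tp (Walk.nil : H.Walk u u) = Walk.nil := rfl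

omit htp huniq in
lemma flat_cons_pos {H : SimpleGraph V} {u z v : V} (h : H.Adj u z) (q : H.Walk z v)
    (h' : T.Adj u z) : flat tp (Walk.cons h q) = Walk.cons h' (flat tp q) := by
  simp only [flat]
  rw [dif_pos h']

omit htp huniq in
lemma flat_cons_neg {H : SimpleGraph V} {u z v : V} (h : H.Adj u z) (q : H.Walk z v)
    (h' : ¬ T.Adj u z) : flat tp (Walk.cons h q) = (tp u z).append (flat tp q) := by
  simp only [flat]
  rw [dif_neg h']

lemma tp_reverse (a b : V) : (tp a b).reverse = tp b a :=
  huniq (tp a b).reverse (htp a b).reverse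

/-- The edge set of the canonical tree path associated to a possible edge. -/
noncomputable def fc (tp : ∀ u v : V, T.Walk u v) (htp : ∀ u v, (tp u v).IsPath)
    (huniq : ∀ {u v : V} (p : T.Walk u v), p.IsPath → p = tp u v) :
    Sym2 V → Finset (Sym2 V) :=
  Sym2.lift ⟨fun a b => (tp a b).edges.toFinset, by
    intro a b
    show (tp a b).edges.toFinset = (tp b a).edges.toFinset
    rw [← tp_reverse tp htp huniq a b, Walk.edges_reverse, List.toFinset_reverse]⟩

/-- The support set of the canonical tree path associated to a possible edge. -/
noncomputable def fsupp (tp : ∀ u v : V, T.Walk u v) (htp : ∀ u v, (tp u v).IsPath)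
    (huniq : ∀ {u v : V} (p : T.Walk u v), p.IsPath → p = tp u v) :
    Sym2 V → Finset V :=
  Sym2.lift ⟨fun a b => (tp a b).support.toFinset, by
    intro a b
    show (tp a b).support.toFinset = (tp b a).support.toFinset
    rw [← tp_reverse tp htp huniq a b, Walk.support_reverse, List.toFinset_reverse]⟩

@[simp] lemma fc_mk (a b : V) : fc tp htp huniq s(a, b) = (tp a b).edges.toFinset := rfl

@[simp] lemma fsupp_mk (a b : V) : fsupp tp htp huniq s(a, b) = (tp a b).support.toFinset := rfl

lemma fc_subset_edgeSet (e : Sym2 V) (f : Sym2 V) (hf : f ∈ fc tp htp huniq e) :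
    f ∈ T.edgeSet := by
  induction e using Sym2.ind with
  | _ a b => exact (tp a b).edges_subset_edgeSet (by simpa using hf)

lemma mem_fsupp_self (e : Sym2 V) (z : V) (hz : z ∈ e) : z ∈ fsupp tp htp huniq e := by
  induction e using Sym2.ind with
  | _ a b =>
    rcases Sym2.mem_iff.1 hz with rfl | rfl
    · simpa using (tp z b).start_mem_support
    · simpa using (tp a z).end_mem_support

lemma mem_fsupp_of_mem_fc (e f : Sym2 V) (hf : f ∈ fc tp htp huniq e) (z : V) (hz : z ∈ f) :
    z ∈ fsupp tp htp huniq e := by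
  induction e using Sym2.ind with
  | _ a b =>
    simp only [fc_mk, List.mem_toFinset] at hf
    simpa using mem_support_of_mem_edge (tp a b) hf hz

lemma exists_fc_edge_of_mem_fsupp (e : Sym2 V) (he : ¬ e.IsDiag) (z : V)
    (hz : z ∈ fsupp tp htp huniq e) : ∃ f ∈ fc tp htp huniq e, z ∈ f := by
  induction e using Sym2.ind with
  | _ a b =>
    have hab : a ≠ b := by simpa using he
    have hnil : ¬ (tp a b).Nil := by
      rw [Walk.nil_iff_length_eq]
      intro h0
      exact hab (Walk.eq_of_length_eq_zero h0)
    obtain ⟨f, hf, hzf⟩ := exists_edge_of_mem_support (tp a b) hnil (by simpa using hz)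
    exact ⟨f, by simpa using hf, hzf⟩

open scoped Classical in
lemma count_flat {H : SimpleGraph V} {u v : V} (w : H.Walk u v) (f : Sym2 V)
    (hf : f ∈ T.edgeSet) :
    (flat tp w).edges.count f =
      w.edges.count f +
        w.edges.countP (fun e => decide (e ∉ T.edgeSet ∧ f ∈ fc tp htp huniq e)) := by
  induction w with
  | nil => simp [flat_nil]
  | @cons a b c h q ih =>
    rw [Walk.edges_cons, List.count_cons, List.countP_cons]
    by_cases h' : T.Adj a b
    · rw [flat_cons_pos tp h q h', Walk.edges_cons, List.count_cons, ih]
      have : (decide (s(a, b) ∉ T.edgeSet ∧ f ∈ fc tp htp huniq s(a, b))) = false := by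
        simp only [decide_eq_false_iff_not, not_and]
        intro hc
        exact absurd ((T.mem_edgeSet).2 h') hc
      rw [this]
      simp only [if_false, Bool.false_eq_true]
      omega
    · rw [flat_cons_neg tp h q h', Walk.edges_append, List.count_append, ih]
      have hfne : (s(a, b) == f) = false := by
        simp only [beq_eq_false_iff_ne, ne_eq]
        intro hc
        rw [← hc] at hf
        exact h' ((T.mem_edgeSet).1 hf)
      have hmem : s(a, b) ∉ T.edgeSet := fun hc => h' ((T.mem_edgeSet).1 hc)
      by_cases hfc : f ∈ fc tp htp huniq s(a, b)
      · have hcount : (tp a b).edges.count f = 1 := by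
          apply List.count_eq_one_of_mem (htp a b).isTrail.edges_nodup
          simpa using hfc
        have : (decide (s(a, b) ∉ T.edgeSet ∧ f ∈ fc tp htp huniq s(a, b))) = true := by
          simp only [decide_eq_true_eq]
          exact ⟨hmem, hfc⟩
        rw [this, hcount, hfne]
        simp only [if_true, Bool.false_eq_true, if_false]
        omega
      · have hcount : (tp a b).edges.count f = 0 := by
          apply List.count_eq_zero.2
          intro hc
          exact hfc (by simpa using hc)
        have : (decide (s(a, b) ∉ T.edgeSet ∧ f ∈ fc tp htp huniq s(a, b))) = false := by
          simp only [decide_eq_false_iff_not, not_and]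
          exact fun _ => hfc
        rw [this, hcount, hfne]
        simp only [Bool.false_eq_true, if_false]
        omega

/-- The heart of the backward direction: a cycle in `H` cannot contain two distinct
non-tree edges. -/
lemma no_two_nontree {H : SimpleGraph V} {u a b x y : V} {c : H.Walk u u} (hc : c.IsCycle)
    (hdisj : ∀ e₁ ∈ c.edges, e₁ ∉ T.edgeSet → ∀ e₂ ∈ c.edges, e₂ ∉ T.edgeSet → e₁ ≠ e₂ →
      ∀ f, f ∈ fc tp htp huniq e₁ → f ∈ fc tp htp huniq e₂ → False)
    (hchar : ∀ f ∈ T.edgeSet,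
      ((f ∈ c.edges) ↔ ∃ e ∈ c.edges, e ∉ T.edgeSet ∧ f ∈ fc tp htp huniq e))
    (hdiag : ∀ e ∈ c.edges, ¬ e.IsDiag)
    (h₀c : s(a, b) ∈ c.edges) (h₀T : s(a, b) ∉ T.edgeSet) (hab : a ≠ b)
    (h₁c : s(x, y) ∈ c.edges) (h₁T : s(x, y) ∉ T.edgeSet)
    (hne : s(x, y) ≠ s(a, b)) : False := by
  have hfcsub : ∀ e ∈ c.edges, e ∉ T.edgeSet → ∀ f ∈ fc tp htp huniq e, f ∈ c.edges := by
    intro e hec heT f hf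
    exact (hchar f (fc_subset_edgeSet tp htp huniq e f hf)).2 ⟨e, hec, heT, hf⟩
  by_cases hcap : ∃ e ∈ c.edges, e ∉ T.edgeSet ∧ e ≠ s(a, b) ∧
      ∃ z ∈ fsupp tp htp huniq e, z ∈ (tp a b).support
  · obtain ⟨e₂, he₂c, he₂T, he₂ne, z, hz₂, hzS⟩ := hcap
    obtain ⟨f₁, f₂, h12, hzf₁, hzf₂, hf₁m, hf₂m⟩ :=
      cluster_two (tp a b) (htp a b) hab hzS h₀T
    obtain ⟨f₃, hf₃fc, hzf₃⟩ :=
      exists_fc_edge_of_mem_fsupp tp htp huniq e₂ (hdiag e₂ he₂c) z hz₂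
    have hf₃T : f₃ ∈ T.edgeSet := fc_subset_edgeSet tp htp huniq e₂ f₃ hf₃fc
    have hmemc : ∀ fi : Sym2 V, (fi = s(a, b) ∨ fi ∈ (tp a b).edges) → fi ∈ c.edges := by
      intro fi hm
      rcases hm with rfl | hm
      · exact h₀c
      · exact hfcsub s(a, b) h₀c h₀T fi (by simpa using hm)
    have hf₃c : f₃ ∈ c.edges := hfcsub e₂ he₂c he₂T f₃ hf₃fc
    have hdist : ∀ fi : Sym2 V, (fi = s(a, b) ∨ fi ∈ (tp a b).edges) → fi ≠ f₃ := by
      intro fi hm hEq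
      rcases hm with rfl | hm
      · exact h₀T (hEq ▸ hf₃T)
      · exact hdisj s(a, b) h₀c h₀T e₂ he₂c he₂T (Ne.symm he₂ne) fi (by simpa using hm)
          (hEq ▸ hf₃fc)
    exact cycle_not_three_incident hc (hmemc f₁ hf₁m) (hmemc f₂ hf₂m) hf₃c h12
      (hdist f₁ hf₁m) (hdist f₂ hf₂m) hzf₁ hzf₂ hzf₃
  · push_neg at hcap
    set S : Set V := {z | z ∈ (tp a b).support} with hS
    have hside : ∀ f ∈ c.edges, (∀ z ∈ f, z ∈ S) ∨ (∀ z ∈ f, z ∉ S) := by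
      intro f hfc'
      by_cases hfT : f ∈ T.edgeSet
      · obtain ⟨e, hec, heT, hffc⟩ := (hchar f hfT).1 hfc'
        by_cases heq : e = s(a, b)
        · left
          intro z hz
          subst heq
          have := mem_fsupp_of_mem_fc tp htp huniq _ f hffc z hz
          simpa [hS] using this
        · right
          intro z hz
          have hzf := mem_fsupp_of_mem_fc tp htp huniq e f hffc z hz
          exact hcap e hec heT heq z hzf
      · by_cases heq : f = s(a, b)
        · left
          intro z hz
          subst heq
          rcases Sym2.mem_iff.1 hz with rfl | rfl
          · exact (tp z b).start_mem_support
          · exact (tp a z).end_mem_support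
        · right
          intro z hz
          exact hcap f hfc' hfT heq z (mem_fsupp_self tp htp huniq f z hz)
    have hsides := walk_side S c hside
    have haS : a ∈ S := (tp a b).start_mem_support
    have haC : a ∈ c.support := c.fst_mem_support_of_mem_edges h₀c
    have hxC : x ∈ c.support := c.fst_mem_support_of_mem_edges h₁c
    have hxS : x ∉ S :=
      hcap s(x, y) h₁c h₁T hne x
        (mem_fsupp_self tp htp huniq s(x, y) x (Sym2.mem_mk_left _ _))
    exact hxS ((hsides x hxC).2 ((hsides a haC).1 haS))

end Flatten

end CactusAux


open CactusAux

theorem spanning_tree_plus_edges_cactus_iff {V : Type*} (G T : SimpleGraph V)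
    (hG : G.Connected) (hTG : T ≤ G) (hT : T.IsTree)
    (F : Set (Sym2 V)) (hF : F ⊆ G.edgeSet \ T.edgeSet) :
    (T ⊔ SimpleGraph.fromEdgeSet F).IsCactus ↔
      ∀ a b c d : V, s(a, b) ∈ F → s(c, d) ∈ F → s(a, b) ≠ s(c, d) →
        ∀ (p : T.Walk a b) (q : T.Walk c d), p.IsPath → q.IsPath →
          ∀ e, e ∈ p.edges → e ∉ q.edges := by
  classical
  set H := T ⊔ SimpleGraph.fromEdgeSet F with hHdef
  have hTH : T ≤ H := le_sup_left
  have hHe : H.edgeSet = T.edgeSet ∪ F := by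
    rw [hHdef, edgeSet_sup, edgeSet_fromEdgeSet]
    ext e
    simp only [Set.mem_union, Set.mem_diff, Set.mem_setOf_eq]
    constructor
    · rintro (h | ⟨h, _⟩)
      · exact Or.inl h
      · exact Or.inr h
    · rintro (h | h)
      · exact Or.inl h
      · exact Or.inr ⟨h, G.not_isDiag_of_mem_edgeSet (hF h).1⟩
  constructor
  · rintro ⟨hconn, hcac⟩ a b c d hab hcd hne p q hp hq e hep heq
    have hGab : G.Adj a b := (G.mem_edgeSet).1 (hF hab).1
    have hGcd : G.Adj c d := (G.mem_edgeSet).1 (hF hcd).1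
    have hHba : H.Adj b a := by
      rw [hHdef, sup_adj]
      right
      rw [fromEdgeSet_adj]
      exact ⟨by rwa [Sym2.eq_swap], hGab.ne'⟩
    have hHdc : H.Adj d c := by
      rw [hHdef, sup_adj]
      right
      rw [fromEdgeSet_adj]
      exact ⟨by rwa [Sym2.eq_swap], hGcd.ne'⟩
    have hpe : (p.mapLe hTH).edges = p.edges := edges_mapLe hTH p
    have hqe : (q.mapLe hTH).edges = q.edges := edges_mapLe hTH q
    have hc₁ : (Walk.cons hHba (p.mapLe hTH)).IsCycle := by
      refine Path.cons_isCycle ⟨p.mapLe hTH, hp.mapLe hTH⟩ hHba ?_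
      show s(b, a) ∉ (p.mapLe hTH).edges
      rw [hpe]
      intro hmem
      have := p.edges_subset_edgeSet hmem
      rw [Sym2.eq_swap] at this
      exact (hF hab).2 this
    have hc₂ : (Walk.cons hHdc (q.mapLe hTH)).IsCycle := by
      refine Path.cons_isCycle ⟨q.mapLe hTH, hq.mapLe hTH⟩ hHdc ?_
      show s(d, c) ∉ (q.mapLe hTH).edges
      rw [hqe]
      intro hmem
      have := q.edges_subset_edgeSet hmem
      rw [Sym2.eq_swap] at this
      exact (hF hcd).2 this
    have hkey := hcac _ _ hc₁ hc₂ e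
      (by rw [Walk.edges_cons, hpe]; exact List.mem_cons_of_mem _ hep)
      (by rw [Walk.edges_cons, hqe]; exact List.mem_cons_of_mem _ heq)
    have hsab : s(a, b) ∈ {f | f ∈ (Walk.cons hHba (p.mapLe hTH)).edges} := by
      rw [Set.mem_setOf_eq, Walk.edges_cons, Sym2.eq_swap]
      exact List.mem_cons_self
    rw [hkey] at hsab
    rw [Set.mem_setOf_eq, Walk.edges_cons, hqe, List.mem_cons] at hsab
    rcases hsab with h | h
    · exact hne (h.trans Sym2.eq_swap)
    · exact (hF hab).2 (q.edges_subset_edgeSet h)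
  · intro hdisj
    have hTc := hT.isConnected
    have hacyc := hT.IsAcyclic
    have htp0 : ∀ u v : V, ∃ p : T.Walk u v, p.IsPath := by
      intro u v
      obtain ⟨w⟩ := hTc.preconnected u v
      exact ⟨w.toPath, w.toPath.2⟩
    choose tp htp using htp0
    have huniq : ∀ {u v : V} (p : T.Walk u v), p.IsPath → p = tp u v := by
      intro u v p hp
      exact congrArg Subtype.val (hacyc.path_unique ⟨p, hp⟩ ⟨tp u v, htp u v⟩)
    have hfc_disj : ∀ e₁ ∈ F, ∀ e₂ ∈ F, e₁ ≠ e₂ →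
        ∀ f, f ∈ fc tp htp huniq e₁ → f ∈ fc tp htp huniq e₂ → False := by
      intro e₁
      induction e₁ using Sym2.ind with
      | _ a b =>
        intro he₁ e₂
        induction e₂ using Sym2.ind with
        | _ c d =>
          intro he₂ hne f h1 h2
          exact hdisj a b c d he₁ he₂ hne (tp a b) (tp c d) (htp a b) (htp c d) f
            (by simpa using h1) (by simpa using h2)
    refine ⟨hTc.mono hTH, ?_⟩
    have key : ∀ (u : V) (c : H.Walk u u), c.IsCycle →
        ∃ e₀ ∈ F, {f | f ∈ c.edges} = insert e₀ (↑(fc tp htp huniq e₀) : Set (Sym2 V)) := by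
      intro u c hc
      have hmemHe : ∀ f ∈ c.edges, f ∈ T.edgeSet ∨ f ∈ F := by
        intro f hf
        have := c.edges_subset_edgeSet hf
        rw [hHe] at this
        exact this
      have hchar : ∀ f ∈ T.edgeSet,
          ((f ∈ c.edges) ↔ ∃ e ∈ c.edges, e ∉ T.edgeSet ∧ f ∈ fc tp htp huniq e) := by
        intro f hf
        have heq := count_flat tp htp huniq c f hf
        have heven : Even ((flat tp c).edges.count f) := acyclic_even_count hacyc (flat tp c) f
        rw [heq] at heven
        have h1 : c.edges.count f ≤ 1 :=
          List.nodup_iff_count_le_one.1 hc.isTrail.edges_nodup f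
        have h2 : c.edges.countP
            (fun e => decide (e ∉ T.edgeSet ∧ f ∈ fc tp htp huniq e)) ≤ 1 := by
          apply countP_le_one_of_unique hc.isTrail.edges_nodup
          intro a ha b hb hpa hpb
          rw [decide_eq_true_eq] at hpa hpb
          by_contra hne'
          have haF : a ∈ F := (hmemHe a ha).resolve_left hpa.1
          have hbF : b ∈ F := (hmemHe b hb).resolve_left hpb.1
          exact hfc_disj a haF b hbF hne' f hpa.2 hpb.2
        obtain ⟨k, hk⟩ := heven
        constructor
        · intro hfm
          have hcnt : 0 < c.edges.count f := List.count_pos_iff.2 hfm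
          have hcp : 0 < c.edges.countP
              (fun e => decide (e ∉ T.edgeSet ∧ f ∈ fc tp htp huniq e)) := by omega
          obtain ⟨e, hem, hpe⟩ := List.countP_pos_iff.1 hcp
          rw [decide_eq_true_eq] at hpe
          exact ⟨e, hem, hpe⟩
        · rintro ⟨e, hem, he1, he2⟩
          have hcp : 0 < c.edges.countP
              (fun e => decide (e ∉ T.edgeSet ∧ f ∈ fc tp htp huniq e)) :=
            List.countP_pos_iff.2 ⟨e, hem, by rw [decide_eq_true_eq]; exact ⟨he1, he2⟩⟩
          have : 0 < c.edges.count f := by omega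
          exact List.count_pos_iff.1 this
      have hex : ∃ e₀ ∈ c.edges, e₀ ∉ T.edgeSet := by
        by_contra hcon
        push_neg at hcon
        exact hacyc _ (hc.transfer hcon)
      obtain ⟨e₀, he₀c, he₀T⟩ := hex
      have he₀F : e₀ ∈ F := (hmemHe e₀ he₀c).resolve_left he₀T
      have hdisjc : ∀ e₁ ∈ c.edges, e₁ ∉ T.edgeSet → ∀ e₂ ∈ c.edges, e₂ ∉ T.edgeSet →
          e₁ ≠ e₂ → ∀ f, f ∈ fc tp htp huniq e₁ → f ∈ fc tp htp huniq e₂ → False := by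
        intro e₁ h₁c h₁T e₂ h₂c h₂T hne f hf1 hf2
        exact hfc_disj e₁ ((hmemHe e₁ h₁c).resolve_left h₁T) e₂
          ((hmemHe e₂ h₂c).resolve_left h₂T) hne f hf1 hf2
      have hdiag : ∀ e ∈ c.edges, ¬ e.IsDiag := by
        intro e he
        exact H.not_isDiag_of_mem_edgeSet (c.edges_subset_edgeSet he)
      have huniqF : ∀ e₀' e₁ : Sym2 V, e₀' ∈ c.edges → e₀' ∉ T.edgeSet →
          e₁ ∈ c.edges → e₁ ∉ T.edgeSet → e₁ = e₀' := by
        intro e₀' e₁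
        induction e₀' using Sym2.ind with
        | _ a b =>
          induction e₁ using Sym2.ind with
          | _ x y =>
            intro h₀c h₀T h₁c h₁T
            by_contra hne
            have hab : a ≠ b := (c.adj_of_mem_edges h₀c).ne
            exact no_two_nontree tp htp huniq hc hdisjc hchar hdiag h₀c h₀T hab h₁c h₁T hne
      refine ⟨e₀, he₀F, ?_⟩
      ext f
      simp only [Set.mem_setOf_eq, Set.mem_insert_iff, Finset.coe_insert, Finset.mem_coe]
      constructor
      · intro hfm
        by_cases hfT : f ∈ T.edgeSet
        · obtain ⟨e, hem, heT, hfe⟩ := (hchar f hfT).1 hfm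
          rw [huniqF e₀ e he₀c he₀T hem heT] at hfe
          exact Or.inr hfe
        · exact Or.inl (huniqF e₀ f he₀c he₀T hfm hfT)
      · rintro (rfl | hfe)
        · exact he₀c
        · exact (hchar f (fc_subset_edgeSet tp htp huniq e₀ f hfe)).2 ⟨e₀, he₀c, he₀T, hfe⟩
    intro u v c₁ c₂ hc₁ hc₂ e he₁ he₂
    obtain ⟨d₁, hd₁F, hs₁⟩ := key u c₁ hc₁
    obtain ⟨d₂, hd₂F, hs₂⟩ := key v c₂ hc₂
    have hd₁T : d₁ ∉ T.edgeSet := (hF hd₁F).2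
    have hd₂T : d₂ ∉ T.edgeSet := (hF hd₂F).2
    have he₁' : e ∈ insert d₁ (↑(fc tp htp huniq d₁) : Set (Sym2 V)) := hs₁ ▸ he₁
    have he₂' : e ∈ insert d₂ (↑(fc tp htp huniq d₂) : Set (Sym2 V)) := hs₂ ▸ he₂
    have hdd : d₁ = d₂ := by
      rcases he₁' with rfl | hefc₁
      · rcases he₂' with rfl | hefc₂
        · rfl
        · exact absurd (fc_subset_edgeSet tp htp huniq d₂ _ hefc₂) hd₁T
      · rcases he₂' with rfl | hefc₂
        · exact absurd (fc_subset_edgeSet tp htp huniq d₁ _ hefc₁) hd₂T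
        · by_contra hne'
          exact hfc_disj d₁ hd₁F d₂ hd₂F hne' e hefc₁ hefc₂
    rw [hs₁, hs₂, hdd]
end
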